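/- Let K be a field, let m, n be positive integers, and let r be an integer with 0 ≤ r ≤ min(m, n). Set f = Σ_{i=0}^{r} x_i y_i in K[x_0, …, x_m, y_0, …, y_n]. There exist vectors x ∈ K^{m+1} and y ∈ K^{n+1} with x ≠ 0 and y ≠ 0 such that f vanishes at (x, y) and all of the partial derivatives ∂f/∂x_0, …, ∂f/∂x_m, ∂f/∂y_0, …, ∂f/∂y_n vanish at (x, y), if and only if r < min(m, n). -/

import Mathlib

/-!
The partial derivatives of `f = ∑ᵢ x_{a i} y_{b i}` are `∂f/∂x_{a i} = y_{b i}` and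
`∂f/∂y_{b i} = x_{a i}`, all others vanish. So the singular points of `f` are exactly the pairs
`(x, y)` vanishing on every coordinate occurring in `f`, and a nonzero such `x` (resp. `y`)
exists iff some `x`-coordinate (resp. `y`-coordinate) does not occur in `f`, i.e. iff `r < m`
(resp. `r < n`).
-/

open MvPolynomial

theorem Fin.castLE_surjective_iff {n k : ℕ} (h : n ≤ k) :
    Function.Surjective (Fin.castLE h) ↔ n = k := by
  refine ⟨fun hs => h.antisymm ?_, fun hnk => ?_⟩
  · simpa using Fintype.card_le_of_surjective _ hs
  · subst hnk
    exact fun i => ⟨i, rfl⟩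

theorem Function.exists_ne_zero_forall_comp_eq_zero_iff {ι σ K : Type*} [Zero K] [One K]
    [NeZero (1 : K)] {a : ι → σ} :
    (∃ x : σ → K, x ≠ 0 ∧ ∀ i, x (a i) = 0) ↔ ¬ Function.Surjective a := by
  classical
  constructor
  · rintro ⟨x, hx, hxa⟩ ha
    exact hx (funext fun j => by obtain ⟨i, rfl⟩ := ha j; exact hxa i)
  · intro ha
    obtain ⟨j, hj⟩ : ∃ j, ∀ i, a i ≠ j := by simpa [Function.Surjective] using ha
    exact ⟨Pi.single j 1, fun h => one_ne_zero (α := K) (by simpa using congrFun h j),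
      fun i => Pi.single_eq_of_ne (hj i) 1⟩

namespace MvPolynomial

variable {K : Type*} [CommRing K] {ι σ τ : Type*} [Fintype ι] {a : ι → σ} {b : ι → τ}

variable (K) in
noncomputable def sumXMulX (a : ι → σ) (b : ι → τ) : MvPolynomial (σ ⊕ τ) K :=
  ∑ i, X (Sum.inl (a i)) * X (Sum.inr (b i))

open Classical in
theorem eval_pderiv_inl_sumXMulX (x : σ → K) (y : τ → K) (j : σ) :
    eval (Sum.elim x y) (pderiv (Sum.inl j) (sumXMulX K a b)) =
      ∑ i, if a i = j then y (b i) else 0 := by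
  simp [sumXMulX, Pi.single_apply, apply_ite]

open Classical in
theorem eval_pderiv_inr_sumXMulX (x : σ → K) (y : τ → K) (j : τ) :
    eval (Sum.elim x y) (pderiv (Sum.inr j) (sumXMulX K a b)) =
      ∑ i, if b i = j then x (a i) else 0 := by
  simp [sumXMulX, Pi.single_apply, apply_ite]

theorem eval_sumXMulX_eq_zero_and_eval_pderiv_eq_zero_iff (x : σ → K) (y : τ → K)
    (ha : Function.Injective a) (hb : Function.Injective b) :
    (eval (Sum.elim x y) (sumXMulX K a b) = 0 ∧
      ∀ v, eval (Sum.elim x y) (pderiv v (sumXMulX K a b)) = 0) ↔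
      (∀ i, x (a i) = 0) ∧ ∀ i, y (b i) = 0 := by
  classical
  refine ⟨fun ⟨_, hder⟩ => ⟨fun i => ?_, fun i => ?_⟩, fun ⟨hx, hy⟩ => ⟨?_, ?_⟩⟩
  · rw [← hder (Sum.inr (b i)), eval_pderiv_inr_sumXMulX]
    simp [hb.eq_iff]
  · rw [← hder (Sum.inl (a i)), eval_pderiv_inl_sumXMulX]
    simp [ha.eq_iff]
  · simp [sumXMulX, hx]
  · rintro (j | j)
    · rw [eval_pderiv_inl_sumXMulX]
      simp [hy]
    · rw [eval_pderiv_inr_sumXMulX]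
      simp [hx]

theorem exists_singular_point_sumXMulX_iff [Nontrivial K] (ha : Function.Injective a)
    (hb : Function.Injective b) :
    (∃ (x : σ → K) (y : τ → K), x ≠ 0 ∧ y ≠ 0 ∧ eval (Sum.elim x y) (sumXMulX K a b) = 0 ∧
      ∀ v, eval (Sum.elim x y) (pderiv v (sumXMulX K a b)) = 0) ↔
      ¬ Function.Surjective a ∧ ¬ Function.Surjective b := by
  simp_rw [← Function.exists_ne_zero_forall_comp_eq_zero_iff (K := K),
    eval_sumXMulX_eq_zero_and_eval_pderiv_eq_zero_iff _ _ ha hb]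
  constructor
  · rintro ⟨x, y, hx, hy, hxa, hyb⟩
    exact ⟨⟨x, hx, hxa⟩, ⟨y, hy, hyb⟩⟩
  · rintro ⟨⟨x, hx, hxa⟩, ⟨y, hy, hyb⟩⟩
    exact ⟨x, y, hx, hy, hxa, hyb⟩

end MvPolynomial

/-- For `f = ∑_{i=0}^{r} x_i y_i` with `0 ≤ r ≤ min m n`, there exists a point
`(x, y)` with `x ≠ 0`, `y ≠ 0` at which `f` and all its partial derivatives
vanish, if and only if `r < min m n`. -/
theorem stmt9 (K : Type*) [Field K] (m n r : ℕ)
    (hr : r ≤ min m n)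
    (f : MvPolynomial (Fin (m + 1) ⊕ Fin (n + 1)) K)
    (hf : f = ∑ i : Fin (r + 1),
      X (Sum.inl (Fin.castLE (by omega) i)) * X (Sum.inr (Fin.castLE (by omega) i))) :
    (∃ (x : Fin (m + 1) → K) (y : Fin (n + 1) → K), x ≠ 0 ∧ y ≠ 0 ∧
        eval (Sum.elim x y) f = 0 ∧
        ∀ v : Fin (m + 1) ⊕ Fin (n + 1), eval (Sum.elim x y) (pderiv v f) = 0) ↔
      r < min m n := by
  have hf' : f = sumXMulX K (Fin.castLE (by omega : r + 1 ≤ m + 1))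
      (Fin.castLE (by omega : r + 1 ≤ n + 1)) := hf
  rw [hf', exists_singular_point_sumXMulX_iff (Fin.castLE_injective _) (Fin.castLE_injective _),
    Fin.castLE_surjective_iff, Fin.castLE_surjective_iff]
  omega
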